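/- arXiv:1007.1158 — 2 statements merged into one kernel-verified Lean document; each statement's English description precedes it below -/
import Mathlib

section
/- For q > 1 and odd n ≥ 3 with q ≥ √2, the inequality [2n+2] > 2[n+1]/sin(π/(2n)) holds, where [r] is the quantum integer (q^r - q^{-r})/(q - q^{-1}). -/
noncomputable def qint (q : ℝ) (r : ℤ) : ℝ := (q ^ r - q ^ (-r)) / (q - q⁻¹)

/-! Since `[2m] = [m] (q^m + q^{-m})` and `[m] > 0`, it suffices that
`2 / sin (π / 2n) < q^{n+1} + q^{-(n+1)}`. Concavity of `sin` on `[0, π]` gives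
`sin x ≥ 3x/π` for `0 ≤ x ≤ π/6`, so the left side is at most `4n/3`; and `q² ≥ 2` with
`n + 1 = 2(k + 1)` gives `q^{n+1} ≥ 2^{k+1} ≥ 4n/3`, with strictness from `q^{-(n+1)} > 0`. -/

open Real

theorem Real.sin_div_mul_le_sin {x y : ℝ} (hx : 0 ≤ x) (hxy : x ≤ y) (hy : y ≤ π) :
    sin y / y * x ≤ sin x := by
  rcases hxy.eq_or_lt with rfl | hxy
  · rcases hx.eq_or_lt with rfl | hx
    · simp
    · rw [div_mul_cancel₀ _ hx.ne']
  have hy0 : 0 < y := hx.trans_lt hxy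
  have := strictConcaveOn_sin_Icc.concaveOn.2 ⟨hy0.le, hy⟩ ⟨le_rfl, pi_pos.le⟩
    (div_nonneg hx hy0.le) (sub_nonneg.2 ((div_le_one hy0).2 hxy.le)) (add_sub_cancel _ _)
  simp only [smul_eq_mul, sin_zero, mul_zero, add_zero, div_mul_cancel₀ _ hy0.ne'] at this
  rwa [div_mul_comm]

theorem Real.three_div_two_mul_le_sin_pi_div {t : ℝ} (ht : 3 ≤ t) :
    3 / (2 * t) ≤ sin (π / (2 * t)) := by
  have ht0 : 0 < t := by linarith
  have hle : π / (2 * t) ≤ π / 6 := by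
    gcongr; linarith
  have := sin_div_mul_le_sin (by positivity) hle (by linarith [pi_pos])
  rw [sin_pi_div_six] at this
  convert this using 1
  field_simp
  norm_num

theorem four_mul_le_three_mul_two_pow (k : ℕ) : 4 * (2 * k + 1) ≤ 3 * 2 ^ (k + 1) := by
  induction k with
  | zero => norm_num
  | succ k ih =>
    have := Nat.lt_two_pow_self (n := k + 1)
    rw [pow_succ]; omega

theorem two_pow_le_pow_two_mul {q : ℝ} (hq : √2 ≤ q) (k : ℕ) : (2 : ℝ) ^ k ≤ q ^ (2 * k) := by
  calc (2 : ℝ) ^ k = (√2) ^ (2 * k) := by rw [pow_mul, sq_sqrt zero_le_two]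
    _ ≤ q ^ (2 * k) := by gcongr

theorem qint_two_mul {q : ℝ} (hq : q ≠ 0) (r : ℤ) :
    qint q (2 * r) = qint q r * (q ^ r + q ^ (-r)) := by
  simp only [qint, mul_comm (2 : ℤ) r, zpow_mul, zpow_neg]
  field_simp
  ring

theorem qint_pos {q : ℝ} (hq : 1 < q) {r : ℤ} (hr : 0 < r) : 0 < qint q r := by
  have hq' : q⁻¹ < q := (inv_lt_one_of_one_lt₀ hq).trans hq
  exact div_pos (sub_pos.2 (zpow_lt_zpow_right₀ hq (by omega))) (sub_pos.2 hq')

theorem four_mul_div_three_le_pow {q : ℝ} (hq : √2 ≤ q) {n : ℕ} (hodd : Odd n) :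
    4 * (n : ℝ) / 3 ≤ q ^ (n + 1) := by
  obtain ⟨k, rfl⟩ := hodd
  have hk : (4 * (2 * k + 1) : ℝ) ≤ 3 * 2 ^ (k + 1) := by
    exact_mod_cast four_mul_le_three_mul_two_pow k
  calc 4 * ((2 * k + 1 : ℕ) : ℝ) / 3 ≤ 2 ^ (k + 1) := by push_cast; linarith
    _ ≤ q ^ (2 * (k + 1)) := two_pow_le_pow_two_mul hq (k + 1)
    _ = q ^ (2 * k + 1 + 1) := by ring_nf

theorem two_div_sin_pi_div_lt {q : ℝ} (hq : √2 ≤ q) {n : ℕ} (hn : 3 ≤ n) (hodd : Odd n) :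
    2 / sin (π / (2 * n)) < q ^ ((n : ℤ) + 1) + q ^ (-((n : ℤ) + 1)) := by
  have hn' : (3 : ℝ) ≤ n := by exact_mod_cast hn
  have hsin := three_div_two_mul_le_sin_pi_div hn'
  have hpow := four_mul_div_three_le_pow hq hodd
  have hq0 : 0 < q := (sqrt_pos.2 two_pos).trans_le hq
  rw [zpow_neg, show (n : ℤ) + 1 = ((n + 1 : ℕ) : ℤ) by push_cast; rfl, zpow_natCast]
  have hpos : 0 < 3 / (2 * (n : ℝ)) := by positivity
  rw [div_lt_iff₀ (hpos.trans_le hsin)]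
  calc (2 : ℝ) = 4 * n / 3 * (3 / (2 * n)) := by field_simp; ring
    _ ≤ q ^ (n + 1) * sin (π / (2 * n)) := by gcongr
    _ < (q ^ (n + 1) + (q ^ (n + 1))⁻¹) * sin (π / (2 * n)) := by
      gcongr
      · exact hpos.trans_le hsin
      · exact lt_add_of_pos_right _ (by positivity)

theorem qint_sin_inequality_general (q : ℝ) (hq2 : Real.sqrt 2 ≤ q)
    (n : ℕ) (hn : 3 ≤ n) (hodd : Odd n) :
    2 * qint q (n + 1) / Real.sin (Real.pi / (2 * n)) < qint q (2 * n + 2) := by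
  have hq : 1 < q := one_lt_sqrt_two.trans_le hq2
  rw [show (2 * n + 2 : ℤ) = 2 * (n + 1) by ring, qint_two_mul (zero_lt_one.trans hq).ne',
    mul_div_assoc, mul_div_left_comm]
  refine mul_lt_mul_of_pos_left (two_div_sin_pi_div_lt hq2 hn hodd) (qint_pos hq ?_)
  positivity

theorem qint_sin_inequality (q : ℝ) (hq : 1 < q) (hq2 : Real.sqrt 2 ≤ q)
    (n : ℕ) (hn : 3 ≤ n) (hodd : Odd n) :
    2 * qint q (n + 1) / Real.sin (Real.pi / (2 * n)) < qint q (2 * n + 2) :=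
  qint_sin_inequality_general q hq2 n hn hodd
end

section
/- Given the multiplication rules S² = xS + uT + cp, T² = vS + yT + cp, ST = uS + vT in a commutative algebra with identity p on span{S,T}, computing S²·T and S·(ST) and equating coefficients of T yields x·v + u·y + c = u² + v². -/
/-! Expanding `S² T` and `S (S T)` with the multiplication table, the `S`- and `p`-coefficients
agree identically, so associativity leaves a single scalar multiple of `T`, whose coefficient must
vanish because `T ≠ 0`. -/

theorem sq_mul_sub_mul_mul_eq_smul {R A : Type*} [CommRing R] [Ring A] [Algebra R A]
    {S T p : A} {x y u v c : R} (hpT : p * T = T)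
    (hS2 : S ^ 2 = x • S + u • T + c • p)
    (hT2 : T ^ 2 = v • S + y • T + c • p)
    (hST : S * T = u • S + v • T) :
    S ^ 2 * T - S * (S * T) = (x * v + u * y + c - (u ^ 2 + v ^ 2)) • T := by
  have hS2T : S ^ 2 * T = x • (u • S + v • T) + u • (v • S + y • T + c • p) + c • T := by
    rw [hS2, add_mul, add_mul, smul_mul_assoc, smul_mul_assoc, smul_mul_assoc, hST, ← sq, hT2,
      hpT]
  have hSST : S * (S * T) = u • (x • S + u • T + c • p) + v • (u • S + v • T) := by
    rw [hST, mul_add, mul_smul_comm, mul_smul_comm, ← sq, hS2, hST]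
  rw [hS2T, hSST]
  module

theorem associativity_constraint'_general {A : Type*} [CommRing A] [Algebra ℝ A]
    (S T p : A) (hpT : p * T = T)
    (hli : LinearIndependent ℝ ![S, T, p])
    (x y u v c : ℝ)
    (hS2 : S ^ 2 = x • S + u • T + c • p)
    (hT2 : T ^ 2 = v • S + y • T + c • p)
    (hST : S * T = u • S + v • T) :
    x * v + u * y + c = u ^ 2 + v ^ 2 := by
  have hT : T ≠ 0 := by simpa using hli.ne_zero 1
  have hassoc : S ^ 2 * T - S * (S * T) = 0 := by rw [sq, mul_assoc, sub_self]
  rw [sq_mul_sub_mul_mul_eq_smul hpT hS2 hT2 hST, smul_eq_zero] at hassoc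
  exact sub_eq_zero.mp (hassoc.resolve_right hT)

theorem associativity_constraint' {A : Type*} [CommRing A] [Algebra ℝ A]
    (S T p : A) (hpS : p * S = S) (hpT : p * T = T)
    (hli : LinearIndependent ℝ ![S, T, p])
    (x y u v c : ℝ)
    (hS2 : S ^ 2 = x • S + u • T + c • p)
    (hT2 : T ^ 2 = v • S + y • T + c • p)
    (hST : S * T = u • S + v • T) :
    x * v + u * y + c = u ^ 2 + v ^ 2 :=
  associativity_constraint'_general S T p hpT hli x y u v c hS2 hT2 hST
end
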